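/- Let B be the ten-element normal band B = B_α ∪ B_β ∪ B_γ ∪ B_δ defined as follows: B_α = {a,b,c,d} and B_β = {e,f,g,h} are 2×2 rectangular bands (with a,b and c,d the 𝓡-classes and a,c and b,d the 𝓛-classes of B_α, so that the product of p and q in B_α takes the 𝓡-class of p and the 𝓛-class of q, and similarly for B_β with e,f,g,h), B_γ = {v} and B_δ = {u} are singletons; the structure semilattice is Y = {α,β,γ,δ} with α > β > δ, α > γ > δ and β,γ incomparable; B is the strong semilattice of these rectangular bands with structure morphisms φ_{α,β}: a ↦ e, b ↦ f, c ↦ g, d ↦ h, and all other structure morphisms the constant maps to v or u (multiplication: for p ∈ B_σ, q ∈ B_τ, pq = (pφ_{σ,στ})(qφ_{τ,στ})). Then in IG(B) the element ē·v̄ is not R*-related to any idempotent of IG(B); in particular IG(B) is not an abundant semigroup. -/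

import Mathlib

/-! Common definitions: free idempotent generated semigroups over bands,
generalised Green's relations, and abundancy notions. -/

/-- `(e, f)` is a *basic pair* if `ef ∈ {e,f}` or `fe ∈ {e,f}`. -/
def basicPair {B : Type*} [Mul B] (e f : B) : Prop :=
  e * f = e ∨ e * f = f ∨ f * e = e ∨ f * e = f

/-- The defining congruence of the free idempotent generated semigroup `IG B`:
the congruence on the free semigroup on `{ē : e ∈ B}` generated by the relations
`ē f̄ = (ef)‾` for basic pairs `(e, f)`. -/
def igCon (B : Type*) [Semigroup B] : Con (FreeSemigroup B) :=
  conGen fun w₁ w₂ => ∃ e f : B, basicPair e f ∧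
    w₁ = FreeSemigroup.of e * FreeSemigroup.of f ∧ w₂ = FreeSemigroup.of (e * f)

/-- The free idempotent generated semigroup over a band `B`. -/
abbrev IG (B : Type*) [Semigroup B] := (igCon B).Quotient

/-- The canonical generator `ē` of `IG B`. -/
def igOf {B : Type*} [Semigroup B] (e : B) : IG B :=
  ((FreeSemigroup.of e : FreeSemigroup B) : (igCon B).Quotient)

/-- `prodSeq x a b = x a * x (a+1) * ⋯ * x b` (it is `x a` when `b ≤ a`). -/
def prodSeq {M : Type*} [Mul M] (x : ℕ → M) (a b : ℕ) : M :=
  (List.range (b - a)).foldl (fun acc i => acc * x (a + i + 1)) (x a)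

/-- The word `x̄_a x̄_{a+1} ⋯ x̄_b` in the free semigroup on `{ē : e ∈ B}`. -/
def freeWord {B : Type*} (x : ℕ → B) (a b : ℕ) : FreeSemigroup B :=
  prodSeq (fun i => FreeSemigroup.of (x i)) a b

/-- The element `x̄_a x̄_{a+1} ⋯ x̄_b` of `IG B`. -/
def igWord {B : Type*} [Semigroup B] (x : ℕ → B) (a b : ℕ) : IG B :=
  ((freeWord x a b : FreeSemigroup B) : (igCon B).Quotient)

/-- Green's relation `𝓡`: `a 𝓡 b` iff `a = b` or `as = b`, `bt = a` for some `s, t`. -/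
def GreenR {S : Type*} [Semigroup S] (a b : S) : Prop :=
  a = b ∨ ∃ s t : S, a * s = b ∧ b * t = a

/-- Green's relation `𝓛`: `a 𝓛 b` iff `a = b` or `sa = b`, `tb = a` for some `s, t`. -/
def GreenL {S : Type*} [Semigroup S] (a b : S) : Prop :=
  a = b ∨ ∃ s t : S, s * a = b ∧ t * b = a

/-- `a 𝓡* b` iff for all `x, y ∈ S¹`, `xa = ya ↔ xb = yb`. -/
def RStar {S : Type*} [Semigroup S] (a b : S) : Prop :=
  ∀ x y : WithOne S,
    x * (a : WithOne S) = y * (a : WithOne S) ↔ x * (b : WithOne S) = y * (b : WithOne S)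

/-- `a 𝓛* b` iff for all `x, y ∈ S¹`, `ax = ay ↔ bx = by`. -/
def LStar {S : Type*} [Semigroup S] (a b : S) : Prop :=
  ∀ x y : WithOne S,
    (a : WithOne S) * x = (a : WithOne S) * y ↔ (b : WithOne S) * x = (b : WithOne S) * y

/-- `a 𝓡̃ b` iff for every idempotent `e`, `ea = a ↔ eb = b`. -/
def RTilde {S : Type*} [Semigroup S] (a b : S) : Prop :=
  ∀ e : S, IsIdempotentElem e → (e * a = a ↔ e * b = b)

/-- `a 𝓛̃ b` iff for every idempotent `e`, `ae = a ↔ be = b`. -/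
def LTilde {S : Type*} [Semigroup S] (a b : S) : Prop :=
  ∀ e : S, IsIdempotentElem e → (a * e = a ↔ b * e = b)

/-- A semigroup is *abundant* if every `𝓡*`-class and every `𝓛*`-class
contains an idempotent. -/
def Abundant (S : Type*) [Semigroup S] : Prop :=
  ∀ a : S, (∃ e : S, IsIdempotentElem e ∧ RStar a e) ∧
    (∃ e : S, IsIdempotentElem e ∧ LStar a e)

/-- A semigroup is *weakly abundant* if every `𝓡̃`-class and every `𝓛̃`-class
contains an idempotent. -/
def WeaklyAbundant (S : Type*) [Semigroup S] : Prop :=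
  ∀ a : S, (∃ e : S, IsIdempotentElem e ∧ RTilde a e) ∧
    (∃ e : S, IsIdempotentElem e ∧ LTilde a e)

/-- On a band, `x` and `y` are `𝒟`-equivalent iff `xyx = x` and `yxy = y`. -/
def dEquiv {B : Type*} [Mul B] (x y : B) : Prop :=
  x * y * x = x ∧ y * x * y = y

/-- On a band, `x` and `y` are `𝒥`-incomparable iff `xyx ≠ x` and `yxy ≠ y`. -/
def jIncomp {B : Type*} [Mul B] (x y : B) : Prop :=
  x * y * x ≠ x ∧ y * x * y ≠ y

/-- One step of the reduction system induced by the presentation of `IG B`: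
replace a factor `ē f̄`, with `(e,f)` a basic pair, by `(ef)‾`. -/
def RedStep {B : Type*} [Semigroup B] (w w' : FreeSemigroup B) : Prop :=
  ∃ (p q : List B) (e f : B), basicPair e f ∧
    w.head :: w.tail = p ++ e :: f :: q ∧
    w'.head :: w'.tail = p ++ (e * f) :: q

/-- A word is in *normal form* (irreducible) if no reduction step applies. -/
def IsNF {B : Type*} [Semigroup B] (w : FreeSemigroup B) : Prop :=
  ∀ w', ¬ RedStep w w'

/-- `x̄₁ ⋯ x̄ₙ` (letters `x 1, …, x n`) is in *almost normal form* witnessed by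
block boundaries `idx 0 = 0 < idx 1 < ⋯ < idx r = n`: within each block all
letters are `𝒟`-equivalent, and letters in adjacent blocks are incomparable. -/
def AlmostNF {B : Type*} [Mul B] (x : ℕ → B) (n r : ℕ) (idx : ℕ → ℕ) : Prop :=
  1 ≤ r ∧ idx 0 = 0 ∧ idx r = n ∧
  (∀ k < r, idx k < idx (k + 1)) ∧
  (∀ k < r, ∀ p q : ℕ, idx k < p → p ≤ idx (k + 1) → idx k < q → q ≤ idx (k + 1) →
    dEquiv (x p) (x q)) ∧
  (∀ k : ℕ, k + 1 < r → ∀ p q : ℕ, idx k < p → p ≤ idx (k + 1) →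
    idx (k + 1) < q → q ≤ idx (k + 2) → jIncomp (x p) (x q))

/-- Condition (P) for `IG B`. -/
def CondP (B : Type*) [Semigroup B] : Prop :=
  ∀ (n m r : ℕ) (u v : ℕ → B) (iu iv : ℕ → ℕ),
    AlmostNF u n r iu → AlmostNF v m r iv →
    igWord u 1 n = igWord v 1 m →
    ((∀ s : ℕ, 1 ≤ s → s ≤ r →
        (u (iu s) * v (iv s) = u (iu s) ∧ v (iv s) * u (iu s) = v (iv s)) →
        igWord u 1 (iu s) = igWord v 1 (iv s)) ∧
      (∀ t : ℕ, t + 1 ≤ r →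
        (u (iu t + 1) * v (iv t + 1) = v (iv t + 1) ∧
          v (iv t + 1) * u (iu t + 1) = u (iu t + 1)) →
        igWord u (iu t + 1) n = igWord v (iv t + 1) m))

/-- A normal band is *pliant* if for every `𝒟`-class `D` there is `c ∈ D` with
`u e u = c` for every `e ∈ D` and every `u` strictly `𝒥`-above `D`. -/
def Pliant (B : Type*) [Mul B] : Prop :=
  ∀ d : B, ∃ c : B, dEquiv c d ∧
    ∀ e u : B, dEquiv e d → (e * u * e = e ∧ u * e * u ≠ u) → u * e * u = c

/-- The ten-element normal band of Section 7 of the paper: a strong semilattice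
`Y = {α, β, γ, δ}` (with `α > β > δ`, `α > γ > δ`, and `β, γ` incomparable) of
rectangular bands `B_α = {a,b,c,d}`, `B_β = {e,f,g,h}` (both `2 × 2`, with
`{a,b}, {c,d}` the `𝓡`-classes and `{a,c}, {b,d}` the `𝓛`-classes of `B_α`,
similarly for `B_β`), `B_γ = {v}`, `B_δ = {u}`; the structure morphism
`φ_{α,β}` sends `a ↦ e, b ↦ f, c ↦ g, d ↦ h`, and all remaining structure
morphisms are the constant maps onto `v` or `u`. -/
inductive B10 : Type
  | a | b | c | d | e | f | g | h | v | u
  deriving DecidableEq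

instance instFintypeB10 : Fintype B10 :=
  ⟨⟨↑[B10.a, B10.b, B10.c, B10.d, B10.e, B10.f, B10.g, B10.h, B10.v, B10.u], by decide⟩,
    fun x => by cases x <;> decide⟩

open B10 in
/-- The multiplication of `B10`: for `p ∈ B_σ`, `q ∈ B_τ`,
`p * q = (p φ_{σ,στ}) (q φ_{τ,στ})`. -/
def B10.mul : B10 → B10 → B10
  | u, _ => u
  | _, u => u
  | v, v => v
  | v, e => u | v, f => u | v, g => u | v, h => u
  | v, _ => v
  | a, v => v | b, v => v | c, v => v | d, v => v
  | e, v => u | f, v => u | g, v => u | h, v => u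
  | a, a => a | a, b => b | a, c => a | a, d => b
  | a, e => e | a, f => f | a, g => e | a, h => f
  | b, a => a | b, b => b | b, c => a | b, d => b
  | b, e => e | b, f => f | b, g => e | b, h => f
  | c, a => c | c, b => d | c, c => c | c, d => d
  | c, e => g | c, f => h | c, g => g | c, h => h
  | d, a => c | d, b => d | d, c => c | d, d => d
  | d, e => g | d, f => h | d, g => g | d, h => h
  | e, a => e | e, b => f | e, c => e | e, d => f
  | e, e => e | e, f => f | e, g => e | e, h => f
  | f, a => e | f, b => f | f, c => e | f, d => f
  | f, e => e | f, f => f | f, g => e | f, h => f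
  | g, a => g | g, b => h | g, c => g | g, d => h
  | g, e => g | g, f => h | g, g => g | g, h => h
  | h, a => g | h, b => h | h, c => g | h, d => h
  | h, e => g | h, f => h | h, g => g | h, h => h

instance : Mul B10 := ⟨B10.mul⟩

instance : Semigroup B10 where
  mul_assoc := by decide


/-! In `IG B10` the word `ē d̄` is a left identity for `ē v̄`: writing `ē = f̄ ā`,
`d̄ f̄ = h̄ = ḡ d̄`, `ā v̄ = v̄` and `d̄ v̄ = v̄` are all basic-pair relations, so
`ē d̄ ē v̄ = ē h̄ v̄ = ē v̄`. An idempotent `w` that is `𝓡*`-related to `ē v̄` would therefore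
satisfy both `w ē v̄ = ē v̄` and `ē d̄ w = w`. No element of `IG B10` does: map it into a finite
semigroup that combines a Rees matrix semigroup over `ℤ/2` (in which the image of `ē d̄` lies
in a non-trivial group) with flags recording where letters of `B_β` occur around the letters
`v̄`. -/

instance {B : Type*} [Mul B] [DecidableEq B] (e f : B) : Decidable (basicPair e f) := by
  unfold basicPair; infer_instance

theorem igOf_mul_igOf_of_basicPair {B : Type*} [Semigroup B] {e f : B} (h : basicPair e f) :
    igOf e * igOf f = igOf (e * f) :=
  (igCon B).eq.mpr (ConGen.Rel.of _ _ ⟨e, f, h, rfl, rfl⟩)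

namespace IG

variable {B T : Type*} [Semigroup B] [Semigroup T] (φ : B → T)

theorem igCon_le_ker (hφ : ∀ e f, basicPair e f → φ e * φ f = φ (e * f)) :
    igCon B ≤ Con.ker (FreeSemigroup.lift φ) :=
  Con.conGen_le.mpr <| by
    rintro _ _ ⟨e, f, hef, rfl, rfl⟩
    simp [Con.ker_rel, hφ e f hef]

def lift (hφ : ∀ e f, basicPair e f → φ e * φ f = φ (e * f)) : IG B →ₙ* T where
  toFun q := Con.liftOn q (FreeSemigroup.lift φ) fun _ _ h => igCon_le_ker φ hφ h
  map_mul' x y := Con.induction_on₂ x y fun _ _ => map_mul (FreeSemigroup.lift φ) _ _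

theorem lift_igOf (hφ : ∀ e f, basicPair e f → φ e * φ f = φ (e * f)) (e : B) :
    lift φ hφ (igOf e) = φ e :=
  FreeSemigroup.lift_of φ e

end IG

theorem RStar.mul_eq_self_iff {S : Type*} [Semigroup S] {a b : S} (h : RStar a b) (x : S) :
    x * a = a ↔ x * b = b := by
  simpa only [one_mul, ← WithOne.coe_mul, WithOne.coe_inj] using h x 1

namespace B10

theorem igOf_e_mul_igOf_d_mul_igOf_e_mul_igOf_v :
    igOf e * igOf d * (igOf e * igOf v) = igOf e * igOf v := by
  have hfa : igOf f * igOf a = igOf e := igOf_mul_igOf_of_basicPair (by decide)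
  have hdf : igOf d * igOf f = igOf h := igOf_mul_igOf_of_basicPair (by decide)
  have hgd : igOf g * igOf d = igOf h := igOf_mul_igOf_of_basicPair (by decide)
  have hav : igOf a * igOf v = igOf v := igOf_mul_igOf_of_basicPair (by decide)
  have heg : igOf e * igOf g = igOf e := igOf_mul_igOf_of_basicPair (by decide)
  have hdv : igOf d * igOf v = igOf v := igOf_mul_igOf_of_basicPair (by decide)
  calc igOf e * igOf d * (igOf e * igOf v)
      = igOf e * (igOf d * igOf f) * (igOf a * igOf v) := by simp only [← hfa, mul_assoc]
    _ = igOf e * (igOf g * igOf d) * igOf v := by rw [hdf, hav, hgd]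
    _ = igOf e * igOf g * (igOf d * igOf v) := by simp only [mul_assoc]
    _ = igOf e * igOf v := by rw [heg, hdv]

/-- A finite semigroup receiving a homomorphism from `IG B10`. `grid i j t β` is the image of a
nonempty word over `B_α ∪ B_β`: `i` and `j` are the `𝓡`- and `𝓛`-class of its value in the
`2 × 2` grid, `t ∈ ℤ/2` is its coordinate in the Rees matrix semigroup whose only non-trivial
sandwich entry sits at `(𝓛-class 0, 𝓡-class 1)`, and `β` records a letter of `B_β`.
`vee l m r` is the image of a word containing `v̄` but not `ū`, recording a letter of `B_β`
before the first `v̄` (`l`), between two `v̄`s (`m`) and after the last one (`r`). -/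
inductive Probe : Type
  | zero : Probe
  | grid : Bool → Bool → Bool → Bool → Probe
  | vee : Bool → Bool → Bool → Probe
  deriving DecidableEq, Fintype

namespace Probe

def sandwich (j i : Bool) : Bool := !j && i

def mul : Probe → Probe → Probe
  | zero, _ => zero
  | _, zero => zero
  | grid i j t β, grid i' j' t' β' => grid i j' (t ^^ sandwich j i' ^^ t') (β || β')
  | grid _ _ _ β, vee l m r => vee (β || l) m r
  | vee l m r, grid _ _ _ β => vee l m (r || β)
  | vee l m r, vee l' m' r' => vee l (m || r || l' || m') r'

instance : Mul Probe := ⟨mul⟩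

instance : Semigroup Probe where
  mul_assoc := by decide

def ofB10 : B10 → Probe
  | .a => grid false false false false
  | .b => grid false true false false
  | .c => grid true false true false
  | .d => grid true true false false
  | .e => grid false false false true
  | .f => grid false true false true
  | .g => grid true false true true
  | .h => grid true true false true
  | .v => vee false false false
  | .u => zero

theorem ofB10_mul_of_basicPair :
    ∀ p q : B10, basicPair p q → ofB10 p * ofB10 q = ofB10 (p * q) := by
  decide

theorem ofB10_e_mul_ofB10_d_mul_ne_self : ∀ t : Probe,
    t * (ofB10 e * ofB10 v) = ofB10 e * ofB10 v → ofB10 e * ofB10 d * t ≠ t := by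
  decide

end Probe

theorem igOf_e_mul_igOf_d_mul_ne_self {w : IG B10}
    (hw : w * (igOf e * igOf v) = igOf e * igOf v) : igOf e * igOf d * w ≠ w := by
  intro hd
  let F := IG.lift Probe.ofB10 Probe.ofB10_mul_of_basicPair
  have hF (p : B10) : F (igOf p) = Probe.ofB10 p := IG.lift_igOf _ _ p
  exact Probe.ofB10_e_mul_ofB10_d_mul_ne_self (F w)
    (by simpa only [map_mul, hF] using congrArg F hw)
    (by simpa only [map_mul, hF] using congrArg F hd)

end B10

/-- `B10` is a (normal) band, and in `IG B10` the element
`ē v̄` is not `𝓡*`-related to any idempotent of `IG B10`; in particular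
`IG B10` is not an abundant semigroup. -/
theorem IG_B10_not_abundant :
    (∀ p : B10, p * p = p) ∧
    (∀ p q r : B10, p * q * r * p = p * r * q * p) ∧
    (¬ ∃ w : IG B10, IsIdempotentElem w ∧ RStar (igOf B10.e * igOf B10.v) w) ∧
    ¬ Abundant (IG B10) := by
  have hev : ¬ ∃ w : IG B10, IsIdempotentElem w ∧ RStar (igOf B10.e * igOf B10.v) w := by
    rintro ⟨w, hw, hR⟩
    exact B10.igOf_e_mul_igOf_d_mul_ne_self ((hR.mul_eq_self_iff w).2 hw)
      ((hR.mul_eq_self_iff _).1 B10.igOf_e_mul_igOf_d_mul_igOf_e_mul_igOf_v)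
  exact ⟨by decide, by decide, hev, fun hab => hev (hab _).1⟩
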